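/- arXiv:2502.09588 — 3 statements merged into one kernel-verified Lean document; each statement's English description precedes it below -/
import Mathlib

section
/- Let α > 3/2. There is a constant C > 0 such that for every j ≥ 1, Σ_{s∈ℤ} (1+|s−j|)^{−α} (|s|+1)^{−(α−1)} ≤ C · j^{1−α}. -/
open Real

private lemma conv_key (α : ℝ) (hα : 1 < α) (j : ℝ) (hj : 1 ≤ j) (t : ℝ) :
    (1 + |t - j|) ^ (-α) * ((|t| + 1) ^ (-(α - 1))) ≤
      2 ^ (α - 1) * (1 + j) ^ (1 - α) *
        ((1 + |t - j|) ^ (-α) + (1 + |t|) ^ (-α)) := by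
  have hApos : (0:ℝ) < 1 + |t - j| := by positivity
  have hBpos : (0:ℝ) < 1 + |t| := by positivity
  have hhalf : (0:ℝ) < (1 + j) / 2 := by linarith
  have hM : ((1 + j) / 2) ^ (1 - α) = 2 ^ (α - 1) * (1 + j) ^ (1 - α) := by
    rw [Real.div_rpow (by linarith) (by norm_num)]
    rw [show (1 - α) = -(α - 1) by ring, Real.rpow_neg (by norm_num : (0:ℝ) ≤ 2)]
    field_simp
  set M := 2 ^ (α - 1) * (1 + j) ^ (1 - α) with hMdef
  have hMpos : 0 < M := by rw [← hM]; positivity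
  have hBcomm : |t| + 1 = 1 + |t| := by ring
  rw [hBcomm]
  rcases le_or_gt t (j / 2) with ht | ht
  · -- t ≤ j/2 : |t - j| = j - t ≥ (j-1)/... ; A ≥ (1+j)/2 and A ≥ B
    have habs : |t - j| = j - t := by
      rw [abs_sub_comm, abs_of_nonneg]; linarith
    have hA2 : (1 + j) / 2 ≤ 1 + |t - j| := by rw [habs]; linarith
    have hAB : 1 + |t| ≤ 1 + |t - j| := by
      rw [habs]
      rcases le_or_gt 0 t with h0 | h0
      · rw [abs_of_nonneg h0]; linarith
      · rw [abs_of_neg h0]; linarith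
    have h1 : (1 + |t - j|) ^ (-(α - 1)) ≤ M := by
      rw [← hM, show (1 - α) = -(α - 1) by ring]
      exact Real.rpow_le_rpow_of_nonpos hhalf hA2 (by linarith)
    have h2 : (1 + |t - j|) ^ (-1 : ℝ) ≤ (1 + |t|) ^ (-1 : ℝ) :=
      Real.rpow_le_rpow_of_nonpos hBpos hAB (by norm_num)
    have hsplit : (1 + |t - j|) ^ (-α) =
        (1 + |t - j|) ^ (-(α - 1)) * (1 + |t - j|) ^ (-1 : ℝ) := by
      rw [← Real.rpow_add hApos]; ring_nf
    have hmerge : (1 + |t|) ^ (-1 : ℝ) * (1 + |t|) ^ (-(α - 1)) = (1 + |t|) ^ (-α) := by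
      rw [← Real.rpow_add hBpos]; ring_nf
    calc (1 + |t - j|) ^ (-α) * (1 + |t|) ^ (-(α - 1))
        = ((1 + |t - j|) ^ (-(α - 1)) * (1 + |t - j|) ^ (-1 : ℝ)) * (1 + |t|) ^ (-(α - 1)) := by
          rw [← hsplit]
      _ ≤ (M * (1 + |t|) ^ (-1 : ℝ)) * (1 + |t|) ^ (-(α - 1)) := by
          apply mul_le_mul_of_nonneg_right _ (by positivity)
          exact mul_le_mul h1 h2 (by positivity) hMpos.le
      _ = M * (1 + |t|) ^ (-α) := by rw [mul_assoc, hmerge]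
      _ ≤ M * ((1 + |t - j|) ^ (-α) + (1 + |t|) ^ (-α)) := by
          apply mul_le_mul_of_nonneg_left _ hMpos.le
          have : (0:ℝ) ≤ (1 + |t - j|) ^ (-α) := by positivity
          linarith
  · -- t > j/2 : B ≥ (1+j)/2
    have hB2 : (1 + j) / 2 ≤ 1 + |t| := by
      have : t ≤ |t| := le_abs_self t
      linarith
    have h1 : (1 + |t|) ^ (-(α - 1)) ≤ M := by
      rw [← hM, show (1 - α) = -(α - 1) by ring]
      exact Real.rpow_le_rpow_of_nonpos hhalf hB2 (by linarith)
    calc (1 + |t - j|) ^ (-α) * (1 + |t|) ^ (-(α - 1))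
        ≤ (1 + |t - j|) ^ (-α) * M := by
          apply mul_le_mul_of_nonneg_left h1 (by positivity)
      _ = M * (1 + |t - j|) ^ (-α) := by ring
      _ ≤ M * ((1 + |t - j|) ^ (-α) + (1 + |t|) ^ (-α)) := by
          apply mul_le_mul_of_nonneg_left _ hMpos.le
          have : (0:ℝ) ≤ (1 + |t|) ^ (-α) := by positivity
          linarith

private lemma F_summable (α : ℝ) (hα1 : (1:ℝ) < α) :
    Summable (fun s : ℤ => (1 + |(s : ℝ)|) ^ (-α)) := by
  have h := (Real.summable_one_div_int_add_rpow (1/2) α).mpr hα1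
  apply h.of_nonneg_of_le (fun s => by positivity)
  intro s
  have hs2 : |(s : ℝ) + 1/2| ≤ 1 + |(s : ℝ)| := by
    calc |(s : ℝ) + 1/2| ≤ |(s : ℝ)| + |(1:ℝ)/2| := abs_add_le _ _
      _ ≤ 1 + |(s : ℝ)| := by rw [abs_of_nonneg (by norm_num : (0:ℝ) ≤ 1/2)]; linarith
  have hs1 : (1:ℝ)/2 ≤ |(s : ℝ) + 1/2| := by
    rcases le_or_gt 0 s with h0 | h0
    · have h0' : (0:ℝ) ≤ (s:ℝ) := by exact_mod_cast h0
      rw [abs_of_nonneg (by linarith)]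
      linarith
    · have hs : (s : ℝ) ≤ -1 := by
        have : s ≤ -1 := by omega
        exact_mod_cast this
      rw [abs_of_nonpos (by linarith)]
      linarith
  have hpow : |(s : ℝ) + 1/2| ^ α ≤ (1 + |(s : ℝ)|) ^ α :=
    Real.rpow_le_rpow (abs_nonneg _) hs2 (by linarith)
  have hposA : (0:ℝ) < |(s : ℝ) + 1/2| ^ α :=
    calc (0:ℝ) < (1/2 : ℝ) ^ α := Real.rpow_pos_of_pos (by norm_num) α
      _ ≤ |(s : ℝ) + 1/2| ^ α := Real.rpow_le_rpow (by norm_num) hs1 (by linarith)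
  rw [Real.rpow_neg (by positivity : (0:ℝ) ≤ 1 + |(s:ℝ)|), ← one_div]
  exact one_div_le_one_div_of_le hposA hpow

set_option maxHeartbeats 2000000 in
theorem convolution_sum_bound (α : ℝ) (hα : α > 3 / 2) :
    ∃ C : ℝ, 0 < C ∧ ∀ j : ℕ, 1 ≤ j →
      (∑' s : ℤ, (1 + |(s : ℝ) - (j : ℝ)|) ^ (-α) * ((|(s : ℝ)| + 1) ^ (-(α - 1))))
        ≤ C * (j : ℝ) ^ (1 - α) := by
  have hα1 : (1:ℝ) < α := by linarith
  set F : ℤ → ℝ := fun s => (1 + |(s : ℝ)|) ^ (-α) with hF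
  have hFpos : ∀ s : ℤ, (0:ℝ) < 1 + |(s : ℝ)| := fun s => by positivity
  have hFsumm : Summable F := F_summable α hα1
  set K := ∑' s : ℤ, F s with hK
  have hKpos : 0 < K := by
    apply Summable.tsum_pos hFsumm (fun s => by positivity) 0
    show (0:ℝ) < (1 + |((0:ℤ) : ℝ)|) ^ (-α)
    positivity
  refine ⟨2 ^ α * K * 2, by positivity, fun j hj => ?_⟩
  have hj1 : (1:ℝ) ≤ (j:ℝ) := by exact_mod_cast hj
  -- shifted summability and tsum
  have hGsumm : Summable (fun s : ℤ => F (s - (j:ℤ))) :=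
    (Equiv.subRight ((j:ℕ):ℤ)).summable_iff.mpr hFsumm
  have hGtsum : (∑' s : ℤ, F (s - (j:ℤ))) = K :=
    (Equiv.subRight ((j:ℕ):ℤ)).tsum_eq F
  have hcast : ∀ s : ℤ, F (s - (j:ℤ)) = (1 + |(s : ℝ) - (j : ℝ)|) ^ (-α) := by
    intro s
    rw [hF]
    simp only
    push_cast
    ring_nf
  set M := (2:ℝ) ^ (α - 1) * (1 + (j:ℝ)) ^ (1 - α) with hMdef
  have hMpos : 0 < M := by positivity
  have hbound : ∀ s : ℤ,
      (1 + |(s : ℝ) - (j : ℝ)|) ^ (-α) * ((|(s : ℝ)| + 1) ^ (-(α - 1))) ≤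
        M * (F (s - (j:ℤ)) + F s) := by
    intro s
    rw [hcast s, hF]
    exact conv_key α hα1 (j:ℝ) hj1 (s:ℝ)
  have hBsumm : Summable (fun s : ℤ => M * (F (s - (j:ℤ)) + F s)) :=
    ((hGsumm.add hFsumm).mul_left M)
  have htermsumm : Summable (fun s : ℤ =>
      (1 + |(s : ℝ) - (j : ℝ)|) ^ (-α) * ((|(s : ℝ)| + 1) ^ (-(α - 1)))) :=
    hBsumm.of_nonneg_of_le (fun s => by positivity) hbound
  have hsum_le : (∑' s : ℤ, (1 + |(s : ℝ) - (j : ℝ)|) ^ (-α) * ((|(s : ℝ)| + 1) ^ (-(α - 1))))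
      ≤ ∑' s : ℤ, M * (F (s - (j:ℤ)) + F s) :=
    Summable.tsum_le_tsum hbound htermsumm hBsumm
  have htsumB : (∑' s : ℤ, M * (F (s - (j:ℤ)) + F s)) = M * (K + K) := by
    rw [tsum_mul_left, Summable.tsum_add hGsumm hFsumm, hGtsum]
  have hfinal : M * (K + K) ≤ 2 ^ α * K * 2 * (j:ℝ) ^ (1 - α) := by
    have hjpow : (1 + (j:ℝ)) ^ (1 - α) ≤ (j:ℝ) ^ (1 - α) :=
      Real.rpow_le_rpow_of_nonpos (by linarith) (by linarith) (by linarith)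
    have h2 : (2:ℝ) ^ (α - 1) ≤ 2 ^ α := by
      apply Real.rpow_le_rpow_of_exponent_le (by norm_num) (by linarith)
    calc M * (K + K) = 2 ^ (α - 1) * (1 + (j:ℝ)) ^ (1 - α) * (2 * K) := by rw [hMdef]; ring
      _ ≤ 2 ^ α * (j:ℝ) ^ (1 - α) * (2 * K) := by
          apply mul_le_mul_of_nonneg_right _ (by positivity)
          apply mul_le_mul h2 hjpow (by positivity) (by positivity)
      _ = 2 ^ α * K * 2 * (j:ℝ) ^ (1 - α) := by ring
  calc (∑' s : ℤ, (1 + |(s : ℝ) - (j : ℝ)|) ^ (-α) * ((|(s : ℝ)| + 1) ^ (-(α - 1))))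
      ≤ ∑' s : ℤ, M * (F (s - (j:ℤ)) + F s) := hsum_le
    _ = M * (K + K) := htsumB
    _ ≤ 2 ^ α * K * 2 * (j:ℝ) ^ (1 - α) := hfinal
end

section
/- Let E = {−1,+1} and for each n ∈ ℕ let λ_n be the probability measure on E with λ_n(+1) = p_n where p_n = exp(β Σ_{i=1}^n i^{−α}) / (2 cosh(β Σ_{i=1}^n i^{−α})), and let p_∞ = exp(βζ(α))/(2 cosh(βζ(α))) with β > 0 and α > 1. Then p_n → p_∞ and there are constants C₁, C₂ > 0 with C₁ n^{1−α} ≤ |p_∞ − p_n| ≤ C₂ n^{1−α} for all large n. -/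
open Filter Real

/-- Partial sum `β Σ_{i=1}^n i^{−α}`. -/
noncomputable def Sn (α : ℝ) (n : ℕ) : ℝ := ∑ i ∈ Finset.range n, ((i + 1 : ℕ) : ℝ) ^ (-α)

/-- `ζ(α) = Σ_{i=1}^∞ i^{−α}`. -/
noncomputable def zetaSum (α : ℝ) : ℝ := ∑' i : ℕ, ((i + 1 : ℕ) : ℝ) ^ (-α)

/-- The marginal probability `p_n`. -/
noncomputable def pmarg (α β : ℝ) (n : ℕ) : ℝ :=
  Real.exp (β * Sn α n) / (2 * Real.cosh (β * Sn α n))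

/-- The limit probability `p_∞`. -/
noncomputable def pinf (α β : ℝ) : ℝ :=
  Real.exp (β * zetaSum α) / (2 * Real.cosh (β * zetaSum α))

/-- Key per-term inequality, via the mean value theorem. -/
private lemma key_ineq {α : ℝ} (hα : 1 < α) {x : ℝ} (hx : 1 ≤ x) :
    (α - 1) * (x + 1) ^ (-α) ≤ x ^ (1 - α) - (x + 1) ^ (1 - α) ∧
      x ^ (1 - α) - (x + 1) ^ (1 - α) ≤ (α - 1) * x ^ (-α) := by
  have hx0 : (0 : ℝ) < x := lt_of_lt_of_le zero_lt_one hx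
  have hder : ∀ t ∈ Set.Ioo x (x + 1),
      HasDerivAt (fun t : ℝ => t ^ (1 - α)) ((1 - α) * t ^ (-α)) t := by
    intro t ht
    have ht0 : (0 : ℝ) < t := lt_trans hx0 ht.1
    have := Real.hasDerivAt_rpow_const (x := t) (p := 1 - α) (Or.inl ht0.ne')
    rwa [show (1 - α - 1 : ℝ) = -α by ring] at this
  have hcont : ContinuousOn (fun t : ℝ => t ^ (1 - α)) (Set.Icc x (x + 1)) := by
    intro t ht
    have ht0 : (0 : ℝ) < t := lt_of_lt_of_le hx0 ht.1
    exact ((Real.hasDerivAt_rpow_const (x := t) (p := 1 - α)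
      (Or.inl ht0.ne')).continuousAt).continuousWithinAt
  obtain ⟨c, hc, hceq⟩ := exists_hasDerivAt_eq_slope (fun t : ℝ => t ^ (1 - α))
    (fun t => (1 - α) * t ^ (-α)) (by linarith : x < x + 1) hcont hder
  have hc0 : (0 : ℝ) < c := lt_trans hx0 hc.1
  have heq : x ^ (1 - α) - (x + 1) ^ (1 - α) = (α - 1) * c ^ (-α) := by
    have h1 : (x + 1 - x : ℝ) = 1 := by ring
    rw [h1, div_one] at hceq
    nlinarith [hceq]
  have hub : c ^ (-α) ≤ x ^ (-α) :=
    Real.rpow_le_rpow_of_nonpos hx0 hc.1.le (by linarith)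
  have hlb : (x + 1) ^ (-α) ≤ c ^ (-α) :=
    Real.rpow_le_rpow_of_nonpos hc0 hc.2.le (by linarith)
  constructor
  · rw [heq]; nlinarith
  · rw [heq]; nlinarith

private lemma hsummable {α : ℝ} (hα : 1 < α) :
    Summable (fun i : ℕ => ((i + 1 : ℕ) : ℝ) ^ (-α)) := by
  have h : Summable (fun n : ℕ => (n : ℝ) ^ (-α)) :=
    Real.summable_nat_rpow.mpr (by linarith)
  exact (summable_nat_add_iff 1).mpr h


/-- Two-sided bound on the tail `ζ(α) - Sₙ`. -/
private lemma tail_bounds {α : ℝ} (hα : 1 < α) {n : ℕ} (hn : 1 ≤ n) :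
    ((n : ℝ) + 1) ^ (1 - α) / (α - 1) ≤ zetaSum α - Sn α n ∧
      zetaSum α - Sn α n ≤ (n : ℝ) ^ (1 - α) / (α - 1) := by
  have hα1 : (0 : ℝ) < α - 1 := by linarith
  have hn1 : (1 : ℝ) ≤ (n : ℝ) := by exact_mod_cast hn
  have hsum := hsummable hα
  have htail : zetaSum α - Sn α n = ∑' i : ℕ, ((i + n + 1 : ℕ) : ℝ) ^ (-α) := by
    have h := Summable.sum_add_tsum_nat_add n hsum
    rw [zetaSum, Sn, ← h]
    exact add_sub_cancel_left _ _
  have hterm_nonneg : ∀ i : ℕ, (0 : ℝ) ≤ ((i + n + 1 : ℕ) : ℝ) ^ (-α) :=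
    fun i => Real.rpow_nonneg (by positivity) _
  have hinonneg : ∀ i : ℕ, (0 : ℝ) ≤ (i : ℝ) := fun i => Nat.cast_nonneg i
  constructor
  · -- lower bound
    rw [htail]
    have hsum' : Summable (fun i : ℕ => ((i + n + 1 : ℕ) : ℝ) ^ (-α)) :=
      (summable_nat_add_iff n).mpr hsum
    have hpartial : ∀ m : ℕ,
        (((n : ℝ) + 1) ^ (1 - α) - ((n : ℝ) + ((m : ℝ) + 1)) ^ (1 - α)) / (α - 1) ≤
          ∑ i ∈ Finset.range m, ((i + n + 1 : ℕ) : ℝ) ^ (-α) := by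
      intro m
      have htel := Finset.sum_range_sub'
        (f := fun i : ℕ => ((n : ℝ) + ((i : ℝ) + 1)) ^ (1 - α)) m
      push_cast at htel
      norm_num at htel
      rw [div_le_iff₀ hα1, ← htel, ← Finset.sum_sub_distrib, Finset.sum_mul]
      apply Finset.sum_le_sum
      intro i _
      have hx : (1 : ℝ) ≤ (n : ℝ) + ((i : ℝ) + 1) := by
        have := hinonneg i; linarith
      have h := (key_ineq hα hx).2
      have hc1 : ((i + n + 1 : ℕ) : ℝ) = (n : ℝ) + ((i : ℝ) + 1) := by push_cast; ring
      have hc2 : (n : ℝ) + ((i : ℝ) + 1 + 1) = ((n : ℝ) + ((i : ℝ) + 1)) + 1 := by ring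
      rw [hc1, hc2]
      linarith
    have hlim1 : Tendsto (fun m => ∑ i ∈ Finset.range m, ((i + n + 1 : ℕ) : ℝ) ^ (-α))
        atTop (nhds (∑' i : ℕ, ((i + n + 1 : ℕ) : ℝ) ^ (-α))) :=
      hsum'.hasSum.tendsto_sum_nat
    have hlim2 : Tendsto (fun m : ℕ =>
        (((n : ℝ) + 1) ^ (1 - α) - ((n : ℝ) + ((m : ℝ) + 1)) ^ (1 - α)) / (α - 1)) atTop
        (nhds ((((n : ℝ) + 1) ^ (1 - α) - 0) / (α - 1))) := by
      apply Tendsto.div_const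
      apply Tendsto.const_sub
      have h1 : Tendsto (fun m : ℕ => (n : ℝ) + ((m : ℝ) + 1)) atTop atTop := by
        have h2 := tendsto_atTop_add_const_right atTop ((n : ℝ) + 1)
          (tendsto_natCast_atTop_atTop (R := ℝ))
        refine h2.congr fun m => by ring
      have h3 := (tendsto_rpow_neg_atTop (by linarith : (0:ℝ) < α - 1)).comp h1
      simpa [Function.comp_def, show -(α - 1) = 1 - α by ring] using h3
    have hfinal := le_of_tendsto_of_tendsto' hlim2 hlim1 hpartial
    simpa using hfinal
  · -- upper bound
    rw [htail]
    apply Real.tsum_le_of_sum_range_le hterm_nonneg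
    intro m
    have htel := Finset.sum_range_sub'
      (f := fun i : ℕ => ((n : ℝ) + (i : ℝ)) ^ (1 - α)) m
    push_cast at htel
    norm_num at htel
    have hBnonneg : (0 : ℝ) ≤ ((n : ℝ) + (m : ℝ)) ^ (1 - α) :=
      Real.rpow_nonneg (by positivity) _
    have hstep : ∑ i ∈ Finset.range m, ((i + n + 1 : ℕ) : ℝ) ^ (-α) ≤
        ((n : ℝ) ^ (1 - α) - ((n : ℝ) + (m : ℝ)) ^ (1 - α)) / (α - 1) := by
      rw [le_div_iff₀ hα1, ← htel, ← Finset.sum_sub_distrib, Finset.sum_mul]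
      apply Finset.sum_le_sum
      intro i _
      have hx : (1 : ℝ) ≤ (n : ℝ) + (i : ℝ) := by
        have := hinonneg i; linarith
      have h := (key_ineq hα hx).1
      have hc1 : ((i + n + 1 : ℕ) : ℝ) = ((n : ℝ) + (i : ℝ)) + 1 := by push_cast; ring
      have hc2 : (n : ℝ) + ((i : ℝ) + 1) = ((n : ℝ) + (i : ℝ)) + 1 := by ring
      rw [hc1, hc2]
      linarith
    refine hstep.trans ?_
    apply div_le_div_of_nonneg_right ?_ ?_
    · linarith
    · exact hα1.le


/-- Two-sided Lipschitz-type bound for `x ↦ exp (β x) / (2 cosh (β x))`. -/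
private lemma fdiff_bounds {β : ℝ} (hβ : 0 < β) {a b M : ℝ} (ha : 0 ≤ a) (hab : a ≤ b)
    (hbM : b ≤ M) :
    β / 2 * Real.exp (-(2 * β * M)) * (b - a) ≤
      Real.exp (β * b) / (2 * Real.cosh (β * b)) - Real.exp (β * a) / (2 * Real.cosh (β * a)) ∧
    Real.exp (β * b) / (2 * Real.cosh (β * b)) - Real.exp (β * a) / (2 * Real.cosh (β * a)) ≤
      2 * β * (b - a) := by
  have hrw : ∀ x : ℝ, Real.exp (β * x) / (2 * Real.cosh (β * x)) =
      1 / (1 + Real.exp (-(2 * β * x))) := by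
    intro x
    rw [Real.cosh_eq]
    rw [div_eq_div_iff (by positivity) (by positivity)]
    rw [mul_add, mul_one, ← Real.exp_add]
    ring_nf
  rw [hrw, hrw]
  set u := Real.exp (-(2 * β * a)) with hu
  set v := Real.exp (-(2 * β * b)) with hv
  have hv0 : 0 < v := Real.exp_pos _
  have hu0 : 0 < u := Real.exp_pos _
  have hu1 : u ≤ 1 := by
    rw [hu, Real.exp_le_one_iff]; nlinarith
  have hv1 : v ≤ 1 := by
    rw [hv, Real.exp_le_one_iff]; nlinarith
  have hvM : Real.exp (-(2 * β * M)) ≤ v := by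
    rw [hv]; apply Real.exp_le_exp.mpr; nlinarith
  set s := 2 * β * (b - a) with hs
  have hs0 : 0 ≤ s := mul_nonneg (by positivity) (by linarith)
  have huv : u = v * Real.exp s := by
    rw [hu, hv, hs, ← Real.exp_add]; ring_nf
  have hvu : v = u * Real.exp (-s) := by
    rw [hu, hv, hs, ← Real.exp_add]; ring_nf
  have hexp1 : s + 1 ≤ Real.exp s := Real.add_one_le_exp s
  have hexp2 : -s + 1 ≤ Real.exp (-s) := Real.add_one_le_exp (-s)
  have hexp3 : Real.exp (-s) ≤ 1 := by rw [Real.exp_le_one_iff]; linarith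
  have hNub : u - v ≤ s := by
    rw [hvu]; nlinarith
  have hNlb : Real.exp (-(2 * β * M)) * s ≤ u - v := by
    rw [huv]; nlinarith
  have hdiff : 1 / (1 + v) - 1 / (1 + u) = (u - v) / ((1 + u) * (1 + v)) := by
    have h1 : (1 : ℝ) + u ≠ 0 := by positivity
    have h2 : (1 : ℝ) + v ≠ 0 := by positivity
    rw [div_sub_div _ _ h2 h1, mul_comm (1 + v) (1 + u)]
    congr 1
    ring
  rw [hdiff]
  have hD1 : 1 ≤ (1 + u) * (1 + v) := by nlinarith
  have hD4 : (1 + u) * (1 + v) ≤ 4 := by nlinarith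
  have hD0 : 0 < (1 + u) * (1 + v) := by nlinarith
  have hcb : 0 ≤ β / 2 * Real.exp (-(2 * β * M)) * (b - a) :=
    mul_nonneg (by positivity) (by linarith)
  have h2b : 0 ≤ 2 * β * (b - a) := mul_nonneg (by positivity) (by linarith)
  constructor
  · rw [le_div_iff₀ hD0]
    have h4 : β / 2 * Real.exp (-(2 * β * M)) * (b - a) * 4 = Real.exp (-(2 * β * M)) * s := by
      rw [hs]; ring
    have h5 := mul_le_mul_of_nonneg_left hD4 hcb
    linarith [h5, h4, hNlb]
  · rw [div_le_iff₀ hD0]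
    have h6 := le_mul_of_one_le_right hs0 hD1
    linarith [hNub, h6]

theorem marginal_probability_asymptotics (α β : ℝ) (hα : α > 1) (hβ : β > 0) :
    Tendsto (fun n => pmarg α β n) atTop (nhds (pinf α β)) ∧
    ∃ C₁ C₂ : ℝ, 0 < C₁ ∧ 0 < C₂ ∧
      ∀ᶠ n : ℕ in atTop,
        C₁ * (n : ℝ) ^ (1 - α) ≤ |pinf α β - pmarg α β n| ∧
        |pinf α β - pmarg α β n| ≤ C₂ * (n : ℝ) ^ (1 - α) := by
  have hα1 : (0 : ℝ) < α - 1 := by linarith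
  have hsum := hsummable hα
  have hlim : Tendsto (fun n => Sn α n) atTop (nhds (zetaSum α)) := by
    have := hsum.hasSum.tendsto_sum_nat
    exact this
  have hcont : Continuous fun x : ℝ => Real.exp (β * x) / (2 * Real.cosh (β * x)) := by
    apply Continuous.div
    · exact (continuous_const.mul continuous_id).rexp
    · exact continuous_const.mul (Real.continuous_cosh.comp (continuous_const.mul continuous_id))
    · intro x
      have := Real.cosh_pos (x := β * x)
      positivity
  constructor
  · have := (hcont.tendsto (zetaSum α)).comp hlim
    exact this
  · set M := zetaSum α with hM
    have hM0 : 0 ≤ M := tsum_nonneg fun i => Real.rpow_nonneg (by positivity) _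
    refine ⟨β / 2 * Real.exp (-(2 * β * M)) * (2 : ℝ) ^ (1 - α) / (α - 1),
      2 * β / (α - 1), by positivity, by positivity, ?_⟩
    filter_upwards [eventually_ge_atTop 1] with n hn
    have hn1 : (1 : ℝ) ≤ (n : ℝ) := by exact_mod_cast hn
    have hn0 : (0 : ℝ) < (n : ℝ) := by linarith
    obtain ⟨htb1, htb2⟩ := tail_bounds hα hn
    rw [← hM] at htb1 htb2
    have hSnonneg : 0 ≤ Sn α n :=
      Finset.sum_nonneg fun i _ => Real.rpow_nonneg (by positivity) _
    have htpos : 0 < ((n : ℝ) + 1) ^ (1 - α) / (α - 1) := by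
      apply div_pos _ hα1
      exact Real.rpow_pos_of_pos (by linarith) _
    have hMs : 0 ≤ M - Sn α n := le_trans htpos.le htb1
    have hab : Sn α n ≤ M := by linarith
    obtain ⟨hf1, hf2⟩ := fdiff_bounds hβ hSnonneg hab le_rfl
    have hdiff_eq : pinf α β - pmarg α β n =
        Real.exp (β * M) / (2 * Real.cosh (β * M)) -
          Real.exp (β * Sn α n) / (2 * Real.cosh (β * Sn α n)) := rfl
    have hfnonneg : 0 ≤ pinf α β - pmarg α β n := by
      rw [hdiff_eq]
      refine le_trans ?_ hf1
      exact mul_nonneg (by positivity) hMs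
    rw [abs_of_nonneg hfnonneg, hdiff_eq]
    have hpow : (2 : ℝ) ^ (1 - α) * (n : ℝ) ^ (1 - α) ≤ ((n : ℝ) + 1) ^ (1 - α) := by
      rw [← Real.mul_rpow (by norm_num) hn0.le]
      apply Real.rpow_le_rpow_of_nonpos (by linarith) (by linarith) (by linarith)
    have hp2 : (0 : ℝ) < (2 : ℝ) ^ (1 - α) := Real.rpow_pos_of_pos (by norm_num) _
    have hpn : (0 : ℝ) < (n : ℝ) ^ (1 - α) := Real.rpow_pos_of_pos hn0 _
    have hc1 : (0 : ℝ) < β / 2 * Real.exp (-(2 * β * M)) := by positivity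
    constructor
    · calc β / 2 * Real.exp (-(2 * β * M)) * (2 : ℝ) ^ (1 - α) / (α - 1) * (n : ℝ) ^ (1 - α)
          = β / 2 * Real.exp (-(2 * β * M)) *
            ((2 : ℝ) ^ (1 - α) * (n : ℝ) ^ (1 - α) / (α - 1)) := by ring
        _ ≤ β / 2 * Real.exp (-(2 * β * M)) * (((n : ℝ) + 1) ^ (1 - α) / (α - 1)) := by
            apply mul_le_mul_of_nonneg_left _ hc1.le
            apply div_le_div_of_nonneg_right hpow hα1.le
        _ ≤ β / 2 * Real.exp (-(2 * β * M)) * (M - Sn α n) :=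
            mul_le_mul_of_nonneg_left htb1 hc1.le
        _ ≤ _ := hf1
    · calc Real.exp (β * M) / (2 * Real.cosh (β * M)) -
            Real.exp (β * Sn α n) / (2 * Real.cosh (β * Sn α n))
          ≤ 2 * β * (M - Sn α n) := hf2
        _ ≤ 2 * β * ((n : ℝ) ^ (1 - α) / (α - 1)) := by
            apply mul_le_mul_of_nonneg_left htb2 (by positivity)
        _ = 2 * β / (α - 1) * (n : ℝ) ^ (1 - α) := by ring
end

section
/- Let τ be a probability measure on Ω = {−1,+1}^ℤ satisfying GKS, let Λ be a finite set, J ≥ 0, and define the measure τ' with density e^{J σ_Λ}/∫ e^{J σ_Λ} dτ with respect to τ. Then for every finite set A, ∫ σ_A dτ' ≥ ∫ σ_A dτ. -/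
open MeasureTheory

abbrev ConfZ : Type := ℤ → Bool

def spin (i : ℤ) (ω : ConfZ) : ℝ := if ω i then 1 else -1

def spinProd (A : Finset ℤ) (ω : ConfZ) : ℝ := ∏ i ∈ A, spin i ω

lemma spin_measurable (i : ℤ) : Measurable (spin i) := by
  unfold spin
  exact Measurable.comp (f := fun ω : ConfZ => ω i)
    (g := fun b : Bool => if b then (1:ℝ) else -1) measurable_from_top (measurable_pi_apply i)

lemma spinProd_measurable (A : Finset ℤ) : Measurable (spinProd A) := by
  unfold spinProd
  exact Finset.measurable_prod A (fun i _ => spin_measurable i)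

lemma spinProd_pm (A : Finset ℤ) (ω : ConfZ) : spinProd A ω = 1 ∨ spinProd A ω = -1 := by
  classical
  induction A using Finset.induction_on with
  | empty => left; simp [spinProd]
  | @insert a s ha ih =>
    unfold spinProd at *
    rw [Finset.prod_insert ha]
    rcases ih with h1 | h1 <;> rcases (by by_cases hb : ω a <;> simp [spin, hb] :
      spin a ω = 1 ∨ spin a ω = -1) with h2 | h2 <;> simp [h1, h2]

lemma spinProd_abs (A : Finset ℤ) (ω : ConfZ) : |spinProd A ω| = 1 := by
  rcases spinProd_pm A ω with h | h <;> simp [h]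

lemma spinProd_integrable (τ : Measure ConfZ) [IsProbabilityMeasure τ] (A : Finset ℤ) :
    Integrable (fun ω => spinProd A ω) τ := by
  refine Integrable.mono' (integrable_const 1) ((spinProd_measurable A).aestronglyMeasurable)
    (ae_of_all _ fun ω => ?_)
  rw [Real.norm_eq_abs, spinProd_abs]

lemma exp_eq (J : ℝ) (A : Finset ℤ) (ω : ConfZ) :
    Real.exp (J * spinProd A ω) = Real.cosh J + Real.sinh J * spinProd A ω := by
  rcases spinProd_pm A ω with h | h <;>
    simp [h, Real.cosh_eq, Real.sinh_eq, Real.exp_neg] <;> ring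

theorem correlation_monotone_under_ferromagnetic_coupling
    (τ : Measure ConfZ) [IsProbabilityMeasure τ]
    (hGKS1 : ∀ A : Finset ℤ, 0 ≤ ∫ ω, spinProd A ω ∂τ)
    (hGKS2 : ∀ A B : Finset ℤ,
      (∫ ω, spinProd A ω ∂τ) * (∫ ω, spinProd B ω ∂τ)
        ≤ ∫ ω, spinProd A ω * spinProd B ω ∂τ)
    (Λ : Finset ℤ) (J : ℝ) (hJ : 0 ≤ J)
    (τ' : Measure ConfZ)
    (hτ' : τ' = τ.withDensity (fun ω => ENNReal.ofReal
      (Real.exp (J * spinProd Λ ω) / ∫ η, Real.exp (J * spinProd Λ η) ∂τ))) :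
    ∀ A : Finset ℤ, (∫ ω, spinProd A ω ∂τ) ≤ ∫ ω, spinProd A ω ∂τ' := by
  intro A
  set mA := ∫ ω, spinProd A ω ∂τ with hmA
  set mL := ∫ ω, spinProd Λ ω ∂τ with hmL
  set c := ∫ ω, spinProd A ω * spinProd Λ ω ∂τ with hc
  set Z := ∫ η, Real.exp (J * spinProd Λ η) ∂τ with hZdef
  have hIntL := spinProd_integrable τ Λ
  have hIntA := spinProd_integrable τ A
  have hIntAL : Integrable (fun ω => spinProd A ω * spinProd Λ ω) τ := by
    refine Integrable.mono' (integrable_const 1)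
      (((spinProd_measurable A).mul (spinProd_measurable Λ)).aestronglyMeasurable)
      (ae_of_all _ fun ω => ?_)
    rw [Real.norm_eq_abs, abs_mul, spinProd_abs, spinProd_abs, mul_one]
  have hsinh : 0 ≤ Real.sinh J := Real.sinh_nonneg_iff.2 hJ
  have hcosh : (1:ℝ) ≤ Real.cosh J := Real.one_le_cosh J
  -- compute Z
  have hZ : Z = Real.cosh J + Real.sinh J * mL := by
    rw [hZdef]
    calc ∫ η, Real.exp (J * spinProd Λ η) ∂τ
        = ∫ η, (Real.cosh J + Real.sinh J * spinProd Λ η) ∂τ := by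
          exact integral_congr_ae (ae_of_all _ fun η => exp_eq J Λ η)
      _ = Real.cosh J + Real.sinh J * mL := by
          rw [integral_add (integrable_const _) (hIntL.const_mul _),
            integral_const, integral_const_mul]
          simp [hmL]
  have hZpos : 0 < Z := by
    rw [hZ]
    nlinarith [hGKS1 Λ, hmL]
  -- rewrite τ' integral
  have hdens : (fun ω => ENNReal.ofReal
      (Real.exp (J * spinProd Λ ω) / Z)) =
      fun ω => ((Real.toNNReal (Real.exp (J * spinProd Λ ω) / Z) : NNReal) : ENNReal) := by
    rfl
  have hmeas : Measurable (fun ω => Real.toNNReal (Real.exp (J * spinProd Λ ω) / Z)) := by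
    apply Measurable.real_toNNReal
    exact (((spinProd_measurable Λ).const_mul J).exp).div_const Z
  have hτ'int : ∫ ω, spinProd A ω ∂τ' =
      ∫ ω, (Real.exp (J * spinProd Λ ω) / Z) * spinProd A ω ∂τ := by
    rw [hτ', hdens, integral_withDensity_eq_integral_smul hmeas]
    refine integral_congr_ae (ae_of_all _ fun ω => ?_)
    have hnn : 0 ≤ Real.exp (J * spinProd Λ ω) / Z :=
      div_nonneg (Real.exp_nonneg _) hZpos.le
    simp [NNReal.smul_def, Real.coe_toNNReal _ hnn]
  rw [hτ'int]
  have hcomp : ∫ ω, (Real.exp (J * spinProd Λ ω) / Z) * spinProd A ω ∂τ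
      = (Real.cosh J * mA + Real.sinh J * c) / Z := by
    calc ∫ ω, (Real.exp (J * spinProd Λ ω) / Z) * spinProd A ω ∂τ
        = ∫ ω, (Real.cosh J * spinProd A ω + Real.sinh J * (spinProd A ω * spinProd Λ ω)) / Z ∂τ := by
          refine integral_congr_ae (ae_of_all _ fun ω => ?_)
          simp only [exp_eq]; ring
      _ = (∫ ω, (Real.cosh J * spinProd A ω + Real.sinh J * (spinProd A ω * spinProd Λ ω)) ∂τ) / Z := by
          rw [integral_div]
      _ = (Real.cosh J * mA + Real.sinh J * c) / Z := by
          rw [integral_add (hIntA.const_mul _) (hIntAL.const_mul _),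
            integral_const_mul, integral_const_mul]
  rw [hcomp, le_div_iff₀ hZpos, hZ]
  nlinarith [hGKS2 A Λ, mul_le_mul_of_nonneg_left (hGKS2 A Λ) hsinh]
end
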